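/- arXiv:1004.0377 — 5 statements merged into one kernel-verified Lean document; each statement's English description precedes it below -/
import Mathlib

section
/- There exist universal constants c₁, c₂ > 0 such that the following holds for every n ≥ 1. Let S be a finite nonempty set of Boolean functions f : {0,1}^n → {0,1}, and let f* ∈ S. Then there exist m ≤ c₁·n certificates C₁, …, C_m on {0,1}^n, each of size at most c₂·(1 + log₂|S|), and functions f₁, …, f_m ∈ S, such that (i) S[C_i] = {f_i} for every i ∈ [m], and (ii) for every x ∈ {0,1}^n, strictly more than m/2 of the values f₁(x), …, f_m(x) equal f*(x) (i.e., the pointwise majority of f₁, …, f_m equals f*). -/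
/-- The Boolean cube `{0,1}^n`. -/
abbrev Cube (n : ℕ) := Fin n → Bool

/-- The size of a certificate (partial Boolean function): the number of inputs
on which it is defined. -/
def certSize {n : ℕ} (C : Cube n → Option Bool) : ℕ :=
  (Finset.univ.filter (fun x => (C x).isSome)).card

/-- A Boolean function is consistent with a certificate if it agrees with it
wherever the certificate is defined. -/
def Consistent {n : ℕ} (f : Cube n → Bool) (C : Cube n → Option Bool) : Prop :=
  ∀ x b, C x = some b → f x = b

namespace MajCertAux

variable {n : ℕ}


private lemma arith_half {c s p : ℕ} (h1 : 2 * c ≤ s) (h2 : s ≤ p * 2) : c ≤ p := by omega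
private lemma arith_two {a1 a2 s : ℕ} (h : a1 + a2 = s) (hle : a1 ≤ a2) : 2 * a1 ≤ s := by omega
private lemma arith_false {A k : ℕ} (h1 : 1 ≤ k) (h : A + k ≤ A) : False := by omega
private lemma arith_pos {k c : ℕ} (h : k < 4 * c) : 0 < c := by omega
private lemma arith_4lt {k c k' : ℕ} (h1 : k < 4 * c) (h2 : k' + c = k) : 4 * k' < 3 * k := by
  omega
private lemma arith_cancel4 {a b : ℕ} (h : 4 * a < 4 * b) : a < b := by omega
private lemma arith_add {x y z t : ℕ} (h1 : x ≤ y + t) (h2 : y ≤ z + 1) : x ≤ z + (t + 1) := by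
  omega
private lemma arith_addL {x y L : ℕ} (h1 : x ≤ y + L) (h2 : y ≤ 3 * L) : x ≤ 4 * L := by omega

instance instDecCons (C : Cube n → Option Bool) :
    DecidablePred (fun g : Cube n → Bool => Consistent g C) :=
  fun _ => decidable_of_iff (∀ x, ∀ b, C x = some b → _) Iff.rfl

/-- The set of functions of `S` consistent with `C`. -/
def SF (S : Finset (Cube n → Bool)) (C : Cube n → Option Bool) : Finset (Cube n → Bool) :=
  S.filter (fun g => Consistent g C)

lemma mem_SF {S : Finset (Cube n → Bool)} {C : Cube n → Option Bool} {g : Cube n → Bool} :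
    g ∈ SF S C ↔ g ∈ S ∧ Consistent g C := Finset.mem_filter

/-- Weighted error of `g` w.r.t. target `fstar`. -/
def errW (fstar : Cube n → Bool) (w : Cube n → ℕ) (g : Cube n → Bool) : ℕ :=
  ∑ z ∈ Finset.univ.filter (fun z => g z ≠ fstar z), w z

/-- Total weight. -/
def totW (w : Cube n → ℕ) : ℕ := ∑ z, w z

/-- Surviving functions with large weighted error. -/
def Bad (S : Finset (Cube n → Bool)) (fstar : Cube n → Bool) (w : Cube n → ℕ)
    (C : Cube n → Option Bool) : Finset (Cube n → Bool) :=
  (SF S C).filter (fun g => totW w < 4 * errW fstar w g)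

lemma consistent_update {C : Cube n → Option Bool} {z : Cube n} {b : Bool}
    (hz : C z = none) (g : Cube n → Bool) :
    Consistent g (Function.update C z (some b)) ↔ Consistent g C ∧ g z = b := by
  constructor
  · intro h
    refine ⟨fun x c hx => ?_, h z b (by simp)⟩
    rcases eq_or_ne x z with rfl | hne
    · rw [hz] at hx; cases hx
    · exact h x c (by rwa [Function.update_of_ne hne])
  · rintro ⟨h1, h2⟩ x c hx
    rcases eq_or_ne x z with rfl | hne
    · rw [Function.update_self] at hx; cases hx; exact h2
    · rw [Function.update_of_ne hne] at hx; exact h1 x c hx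

lemma SF_update {S : Finset (Cube n → Bool)} {C : Cube n → Option Bool} {z : Cube n} {b : Bool}
    (hz : C z = none) :
    SF S (Function.update C z (some b)) = (SF S C).filter (fun g => g z = b) := by
  ext g
  simp only [SF, Finset.mem_filter, consistent_update hz]
  tauto

lemma certSize_update_le (C : Cube n → Option Bool) (z : Cube n) (b : Bool) :
    certSize (Function.update C z (some b)) ≤ certSize C + 1 := by
  unfold certSize
  have hsub : Finset.univ.filter (fun x => ((Function.update C z (some b)) x).isSome) ⊆
      insert z (Finset.univ.filter (fun x => (C x).isSome)) := by
    intro x hx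
    rcases eq_or_ne x z with rfl | hne
    · exact Finset.mem_insert_self _ _
    · refine Finset.mem_insert_of_mem ?_
      simp only [Finset.mem_filter, Finset.mem_univ, true_and] at hx ⊢
      rwa [Function.update_of_ne hne] at hx
  exact le_trans (Finset.card_le_card hsub) (Finset.card_insert_le _ _)

lemma certSize_none : certSize (fun _ : Cube n => (none : Option Bool)) = 0 := by
  simp [certSize]

/-- Halving: isolate some survivor with few extra certificate entries. -/
lemma halve (S : Finset (Cube n → Bool)) :
    ∀ (t : ℕ) (C : Cube n → Option Bool), (SF S C).Nonempty → (SF S C).card ≤ 2 ^ t →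
    ∃ f C', f ∈ SF S C ∧ SF S C' = {f} ∧ certSize C' ≤ certSize C + t := by
  intro t
  induction t with
  | zero =>
    intro C hne hcard
    have h1 : (SF S C).card = 1 := le_antisymm (by simpa using hcard) (Finset.one_le_card.2 hne)
    obtain ⟨f, hf⟩ := Finset.card_eq_one.1 h1
    exact ⟨f, C, by rw [hf]; exact Finset.mem_singleton_self f, hf, by omega⟩
  | succ t ih =>
    intro C hne hcard
    by_cases hle : (SF S C).card ≤ 1
    · have h1 : (SF S C).card = 1 := le_antisymm hle (Finset.one_le_card.2 hne)
      obtain ⟨f, hf⟩ := Finset.card_eq_one.1 h1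
      exact ⟨f, C, by rw [hf]; exact Finset.mem_singleton_self f, hf, by omega⟩
    · obtain ⟨g, hg, g', hg', hgg'⟩ := Finset.one_lt_card.1 (show 1 < (SF S C).card by omega)
      obtain ⟨x, hx⟩ := Function.ne_iff.1 hgg'
      have hCx : C x = none := by
        cases hCv : C x with
        | none => rfl
        | some c =>
          have h1 : g x = c := (mem_SF.1 hg).2 x c hCv
          have h2 : g' x = c := (mem_SF.1 hg').2 x c hCv
          exact absurd (h1.trans h2.symm) hx
      have hsplitcard : ((SF S C).filter (fun h => h x = true)).card +
          ((SF S C).filter (fun h => h x = false)).card = (SF S C).card := by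
        have hcongr : (SF S C).filter (fun h => ¬ (h x = true)) =
            (SF S C).filter (fun h => h x = false) := by
          apply Finset.filter_congr
          intro h _
          simp [Bool.not_eq_true]
        rw [← hcongr]
        exact Finset.card_filter_add_card_filter_not (p := fun h : Cube n → Bool => h x = true)
      have hmemg : g ∈ (SF S C).filter (fun h => h x = g x) := Finset.mem_filter.2 ⟨hg, rfl⟩
      have hmemg' : g' ∈ (SF S C).filter (fun h => h x = g' x) := Finset.mem_filter.2 ⟨hg', rfl⟩
      have hsum2 : ((SF S C).filter (fun h => h x = g x)).card +
          ((SF S C).filter (fun h => h x = g' x)).card = (SF S C).card := by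
        cases hgx : g x <;> cases hg'x : g' x
        · exact absurd (hgx.trans hg'x.symm) hx
        · rw [Nat.add_comm]; exact hsplitcard
        · exact hsplitcard
        · exact absurd (hgx.trans hg'x.symm) hx
      have main : ∀ b : Bool, ((SF S C).filter (fun h => h x = b)).Nonempty →
          2 * ((SF S C).filter (fun h => h x = b)).card ≤ (SF S C).card →
          ∃ f C', f ∈ SF S C ∧ SF S C' = {f} ∧ certSize C' ≤ certSize C + (t + 1) := by
        intro b hbne hbcard
        have hcard2 : ((SF S C).filter (fun h => h x = b)).card ≤ 2 ^ t := by
          have h2 : (SF S C).card ≤ 2 ^ t * 2 := by rw [← pow_succ]; exact hcard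
          exact arith_half hbcard h2
        have hSFu : SF S (Function.update C x (some b)) =
            (SF S C).filter (fun h => h x = b) := SF_update hCx
        obtain ⟨f, C', hf, hSF', hsz⟩ := ih (Function.update C x (some b))
          (by rw [hSFu]; exact hbne) (by rw [hSFu]; exact hcard2)
        refine ⟨f, C', ?_, hSF', ?_⟩
        · rw [hSFu] at hf; exact Finset.mem_of_mem_filter f hf
        · exact arith_add hsz (certSize_update_le C x b)
      rcases le_total ((SF S C).filter (fun h => h x = g x)).card
          ((SF S C).filter (fun h => h x = g' x)).card with hmin | hmin
      · exact main (g x) ⟨g, hmemg⟩ (arith_two hsum2 hmin)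
      · exact main (g' x) ⟨g', hmemg'⟩
          (arith_two ((Nat.add_comm _ _).trans hsum2) hmin)

/-- Stage 1: kill all "bad" survivors using entries consistent with `fstar`. -/
lemma stage1 (S : Finset (Cube n → Bool)) (fstar : Cube n → Bool) (w : Cube n → ℕ) :
    ∀ (t : ℕ) (C : Cube n → Option Bool), Consistent fstar C →
      (Bad S fstar w C).card * 3 ^ t < 4 ^ t →
    ∃ C', Consistent fstar C' ∧ Bad S fstar w C' = ∅ ∧ certSize C' ≤ certSize C + t := by
  intro t
  induction t with
  | zero =>
    intro C hcons hlt
    simp only [pow_zero, Nat.mul_one] at hlt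
    exact ⟨C, hcons, Finset.card_eq_zero.1 (by omega), by omega⟩
  | succ t ih =>
    intro C hcons hlt
    by_cases hB : Bad S fstar w C = ∅
    · exact ⟨C, hcons, hB, by omega⟩
    · have hk1 : 1 ≤ (Bad S fstar w C).card :=
        Finset.card_pos.2 (Finset.nonempty_of_ne_empty hB)
      set Bd := Bad S fstar w C with hBd
      set k := Bd.card with hkdef
      have hswap : ∑ g ∈ Bd, errW fstar w g =
          ∑ z, (Bd.filter (fun g => g z ≠ fstar z)).card * w z := by
        calc ∑ g ∈ Bd, errW fstar w g
            = ∑ g ∈ Bd, ∑ z, (if g z ≠ fstar z then w z else 0) := by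
              apply Finset.sum_congr rfl
              intro g _
              rw [errW, Finset.sum_filter]
          _ = ∑ z, ∑ g ∈ Bd, (if g z ≠ fstar z then w z else 0) := Finset.sum_comm
          _ = ∑ z, (Bd.filter (fun g => g z ≠ fstar z)).card * w z := by
              apply Finset.sum_congr rfl
              intro z _
              rw [← Finset.sum_filter, Finset.sum_const, smul_eq_mul]
      have hexz : ∃ z, k < 4 * (Bd.filter (fun g => g z ≠ fstar z)).card := by
        by_contra hall
        push_neg at hall
        have hlow : k * (totW w + 1) ≤ ∑ g ∈ Bd, 4 * errW fstar w g := by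
          have h := Finset.card_nsmul_le_sum Bd (fun g => 4 * errW fstar w g) (totW w + 1)
            (fun g hg => Nat.succ_le_of_lt (Finset.mem_filter.1 hg).2)
          simpa [smul_eq_mul] using h
        have hhigh : ∑ g ∈ Bd, 4 * errW fstar w g ≤ k * totW w := by
          rw [← Finset.mul_sum, hswap, Finset.mul_sum]
          calc ∑ z, 4 * ((Bd.filter (fun g => g z ≠ fstar z)).card * w z)
              ≤ ∑ z, k * w z := by
                apply Finset.sum_le_sum
                intro z _
                have hz := hall z
                calc 4 * ((Bd.filter (fun g => g z ≠ fstar z)).card * w z)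
                    = (4 * (Bd.filter (fun g => g z ≠ fstar z)).card) * w z := by ring
                  _ ≤ k * w z := Nat.mul_le_mul_right _ hz
            _ = k * totW w := by rw [totW, Finset.mul_sum]
        have hcomb := le_trans hlow hhigh
        rw [Nat.mul_add, Nat.mul_one] at hcomb
        exact arith_false hk1 hcomb
      obtain ⟨z, hz⟩ := hexz
      obtain ⟨cnt, hcntdef⟩ : ∃ c, (Bd.filter (fun g => g z ≠ fstar z)).card = c := ⟨_, rfl⟩
      rw [hcntdef] at hz
      have hcnt1 : 0 < (Bd.filter (fun g => g z ≠ fstar z)).card := by rw [hcntdef]; exact arith_pos hz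
      obtain ⟨g₀, hg₀⟩ := Finset.card_pos.1 hcnt1
      have hg₀Bd : g₀ ∈ Bd := Finset.mem_of_mem_filter _ hg₀
      have hg₀ne : g₀ z ≠ fstar z := (Finset.mem_filter.1 hg₀).2
      have hg₀SF : g₀ ∈ SF S C := Finset.mem_of_mem_filter _ hg₀Bd
      have hCz : C z = none := by
        cases hCv : C z with
        | none => rfl
        | some c =>
          have h1 : g₀ z = c := (mem_SF.1 hg₀SF).2 z c hCv
          have h2 : fstar z = c := hcons z c hCv
          exact absurd (h1.trans h2.symm) hg₀ne
      have hSFu : SF S (Function.update C z (some (fstar z))) =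
          (SF S C).filter (fun g => g z = fstar z) := SF_update hCz
      have hBadu : Bad S fstar w (Function.update C z (some (fstar z))) =
          Bd.filter (fun g => g z = fstar z) := by
        rw [hBd]
        unfold Bad
        rw [hSFu, Finset.filter_comm]
      obtain ⟨k', hk'def⟩ : ∃ c, (Bd.filter (fun g => g z = fstar z)).card = c := ⟨_, rfl⟩
      have hsplit0 : (Bd.filter (fun g => g z = fstar z)).card +
          (Bd.filter (fun g => g z ≠ fstar z)).card = k := by
        have hcongr : Bd.filter (fun g => ¬ (g z = fstar z)) =
            Bd.filter (fun g => g z ≠ fstar z) := by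
          apply Finset.filter_congr
          intro g _
          simp
        rw [← hcongr]
        exact Finset.card_filter_add_card_filter_not (p := fun g : Cube n → Bool => g z = fstar z)
      have hsplit : k' + cnt = k := by rw [← hk'def, ← hcntdef]; exact hsplit0
      have hk'cnt : 4 * k' < 3 * k := arith_4lt hz hsplit
      have hrec : (Bad S fstar w (Function.update C z (some (fstar z)))).card * 3 ^ t < 4 ^ t := by
        rw [hBadu, hk'def]
        have hmain : 4 * (k' * 3 ^ t) < 4 * 4 ^ t := by
          calc 4 * (k' * 3 ^ t) = (4 * k') * 3 ^ t := by ring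
            _ < (3 * k) * 3 ^ t := (Nat.mul_lt_mul_right (Nat.pow_pos (by norm_num))).2 hk'cnt
            _ = k * 3 ^ (t + 1) := by rw [pow_succ]; ring
            _ < 4 ^ (t + 1) := hlt
            _ = 4 * 4 ^ t := by rw [pow_succ]; ring
        exact arith_cancel4 hmain
      obtain ⟨C', hC'cons, hC'bad, hC'size⟩ := ih (Function.update C z (some (fstar z)))
        ((consistent_update hCz fstar).2 ⟨hcons, rfl⟩) hrec
      refine ⟨C', hC'cons, hC'bad, ?_⟩
      exact arith_add hC'size (certSize_update_le C z (fstar z))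

/-- Sub-lemma: for every weight there is an isolated function with small cert and small error. -/
lemma subL (S : Finset (Cube n → Bool)) (fstar : Cube n → Bool) (hfS : fstar ∈ S)
    (w : Cube n → ℕ) :
    ∃ f C, f ∈ S ∧ SF S C = {f} ∧ certSize C ≤ 4 * (Nat.log 2 S.card + 1) ∧
      4 * errW fstar w f ≤ totW w := by
  set L := Nat.log 2 S.card + 1 with hLdef
  have hsL : S.card < 2 ^ L := Nat.lt_pow_succ_log_self (by norm_num) S.card
  have hstart : (Bad S fstar w (fun _ => none)).card * 3 ^ (3 * L) < 4 ^ (3 * L) := by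
    have hb : (Bad S fstar w (fun _ => none)).card ≤ S.card :=
      le_trans (Finset.card_filter_le _ _) (Finset.card_filter_le _ _)
    calc (Bad S fstar w (fun _ => none)).card * 3 ^ (3 * L)
        ≤ S.card * 3 ^ (3 * L) := Nat.mul_le_mul_right _ hb
      _ < 2 ^ L * 3 ^ (3 * L) := (Nat.mul_lt_mul_right (Nat.pow_pos (by norm_num))).2 hsL
      _ = 2 ^ L * (3 ^ 3) ^ L := by rw [pow_mul]
      _ = (2 * 27) ^ L := by rw [← mul_pow]; norm_num
      _ ≤ (64 : ℕ) ^ L := Nat.pow_le_pow_left (by norm_num) L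
      _ = 4 ^ (3 * L) := by rw [pow_mul]; norm_num
  have hconsnone : Consistent fstar (fun _ : Cube n => (none : Option Bool)) := by
    intro x b h
    cases h
  obtain ⟨C₁, hC₁cons, hC₁bad, hC₁size⟩ := stage1 S fstar w (3 * L) (fun _ => none)
    hconsnone hstart
  rw [certSize_none, Nat.zero_add] at hC₁size
  have hfmem : fstar ∈ SF S C₁ := mem_SF.2 ⟨hfS, hC₁cons⟩
  have hSFcard : (SF S C₁).card ≤ 2 ^ L :=
    le_trans (Finset.card_filter_le _ _) (le_of_lt hsL)
  obtain ⟨f, C', hfSF, hSF', hsz'⟩ := halve S L C₁ ⟨fstar, hfmem⟩ hSFcard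
  refine ⟨f, C', (mem_SF.1 hfSF).1, hSF', arith_addL hsz' hC₁size, ?_⟩
  have hfnotbad : f ∉ Bad S fstar w C₁ := by
    rw [hC₁bad]; exact Finset.notMem_empty f
  by_contra hcon
  exact hfnotbad (Finset.mem_filter.2 ⟨hfSF, not_le.1 hcon⟩)

/-- Boosting weights: doubled on each past mistake. -/
def wt (fstar : Cube n → Bool) (F : ℕ → Cube n → Bool) (t : ℕ) : Cube n → ℕ :=
  fun z => 2 ^ ((Finset.range t).filter (fun i => F i z ≠ fstar z)).card

lemma wt_congr {fstar : Cube n → Bool} {F F' : ℕ → Cube n → Bool} {i : ℕ}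
    (h : ∀ j, j < i → F j = F' j) : wt fstar F i = wt fstar F' i := by
  funext z
  unfold wt
  have : (Finset.range i).filter (fun j => F j z ≠ fstar z) =
      (Finset.range i).filter (fun j => F' j z ≠ fstar z) := by
    apply Finset.filter_congr
    intro j hj
    rw [h j (Finset.mem_range.1 hj)]
  rw [this]

end MajCertAux

open MajCertAux

/-- Majority-Certificates Lemma: every `f* ∈ S` is the pointwise majority of
`m = O(n)` functions of `S`, each isolated in `S` by a certificate of size
`O(log₂ |S|)`. -/
theorem majority_certificates :
    ∃ c₁ c₂ : ℝ, 0 < c₁ ∧ 0 < c₂ ∧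
      ∀ (n : ℕ), 1 ≤ n →
      ∀ (S : Finset (Cube n → Bool)), S.Nonempty →
      ∀ fstar : Cube n → Bool, fstar ∈ S →
      ∃ (m : ℕ) (C : Fin m → Cube n → Option Bool) (f : Fin m → Cube n → Bool),
        (m : ℝ) ≤ c₁ * n ∧
        (∀ i, (certSize (C i) : ℝ) ≤ c₂ * (1 + Real.logb 2 S.card)) ∧
        (∀ i, f i ∈ S) ∧
        (∀ i, {g | g ∈ S ∧ Consistent g (C i)} = {f i}) ∧
        (∀ x : Cube n,
          (m : ℝ) / 2 <
            ((Finset.univ.filter (fun i : Fin m => f i x = fstar x)).card : ℝ)) := by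
  refine ⟨8, 4, by norm_num, by norm_num, ?_⟩
  intro n hn S hSne fstar hfstar
  -- the sequence of isolated functions from boosting
  have hseq : ∀ T : ℕ, ∃ (F : ℕ → Cube n → Bool) (Cs : ℕ → Cube n → Option Bool),
      ∀ i, i < T → F i ∈ S ∧ SF S (Cs i) = {F i} ∧
        certSize (Cs i) ≤ 4 * (Nat.log 2 S.card + 1) ∧
        4 * errW fstar (wt fstar F i) (F i) ≤ totW (wt fstar F i) := by
    intro T
    induction T with
    | zero => exact ⟨fun _ => fstar, fun _ _ => none, fun i hi => absurd hi (by omega)⟩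
    | succ T ihT =>
      obtain ⟨F, Cs, hF⟩ := ihT
      obtain ⟨f, C, hf1, hf2, hf3, hf4⟩ := subL S fstar hfstar (wt fstar F T)
      refine ⟨Function.update F T f, Function.update Cs T C, ?_⟩
      intro i hi
      have hwt : wt fstar (Function.update F T f) i = wt fstar F i :=
        wt_congr (fun j hj => Function.update_of_ne (by omega) _ _)
      rcases Nat.lt_or_ge i T with hiT | hiT
      · have h := hF i hiT
        rw [Function.update_of_ne (by omega : i ≠ T), Function.update_of_ne (by omega : i ≠ T),
          hwt]
        exact h
      · have hiT' : i = T := by omega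
        subst hiT'
        rw [Function.update_self, Function.update_self, hwt]
        exact ⟨hf1, hf2, hf3, hf4⟩
  obtain ⟨F, Cs, hF⟩ := hseq (8 * n)
  -- potential function analysis
  have hW0 : totW (wt fstar F 0) = 2 ^ n := by
    unfold totW wt
    simp only [Finset.range_zero, Finset.filter_empty, Finset.card_empty, pow_zero]
    rw [Finset.sum_const, smul_eq_mul, Nat.mul_one, Finset.card_univ]
    simp [Cube]
  have hstep : ∀ t, totW (wt fstar F (t + 1)) =
      totW (wt fstar F t) + errW fstar (wt fstar F t) (F t) := by
    intro t
    unfold totW errW wt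
    rw [Finset.sum_filter, ← Finset.sum_add_distrib]
    apply Finset.sum_congr rfl
    intro z _
    by_cases hw : F t z ≠ fstar z
    · rw [if_pos hw]
      have htni : (t : ℕ) ∉ (Finset.range t).filter (fun i => F i z ≠ fstar z) := by
        intro hmem
        exact absurd (Finset.mem_range.1 (Finset.mem_of_mem_filter _ hmem)) (lt_irrefl t)
      rw [Finset.range_add_one, Finset.filter_insert, if_pos hw,
        Finset.card_insert_of_notMem htni, pow_succ]
      omega
    · rw [if_neg hw, Finset.range_add_one, Finset.filter_insert, if_neg hw]
      omega
  have hpot : ∀ t, t ≤ 8 * n → 4 ^ t * totW (wt fstar F t) ≤ 5 ^ t * 2 ^ n := by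
    intro t
    induction t with
    | zero => intro _; simpa using le_of_eq hW0
    | succ t ih =>
      intro ht
      have ht' : t < 8 * n := by omega
      have h4err := (hF t ht').2.2.2
      have hst := hstep t
      calc 4 ^ (t + 1) * totW (wt fstar F (t + 1))
          = 4 ^ t * (4 * totW (wt fstar F (t + 1))) := by rw [pow_succ]; ring
        _ ≤ 4 ^ t * (5 * totW (wt fstar F t)) := Nat.mul_le_mul_left _ (by omega)
        _ = 5 * (4 ^ t * totW (wt fstar F t)) := by ring
        _ ≤ 5 * (5 ^ t * 2 ^ n) := Nat.mul_le_mul_left _ (ih (by omega))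
        _ = 5 ^ (t + 1) * 2 ^ n := by rw [pow_succ]; ring
  -- certificate size bound in ℝ
  have hcard1 : 1 ≤ S.card := Finset.card_pos.2 hSne
  have hlogb : (Nat.log 2 S.card : ℝ) ≤ Real.logb 2 S.card := Real.natLog_le_logb _ _
  refine ⟨8 * n, fun i => Cs i.val, fun i => F i.val, ?_, ?_, ?_, ?_, ?_⟩
  · push_cast; linarith
  · intro i
    have h := (hF i.val i.isLt).2.2.1
    have h2 : (certSize (Cs i.val) : ℝ) ≤ 4 * ((Nat.log 2 S.card : ℝ) + 1) := by
      exact_mod_cast h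
    linarith
  · intro i
    exact (hF i.val i.isLt).1
  · intro i
    have h := (hF i.val i.isLt).2.1
    ext g
    simp only [Set.mem_setOf_eq, Set.mem_singleton_iff]
    rw [← mem_SF (C := Cs i.val), h, Finset.mem_singleton]
  · intro z
    set k := ((Finset.range (8 * n)).filter (fun i => F i z ≠ fstar z)).card with hkdef
    have hsingle : 2 ^ k ≤ totW (wt fstar F (8 * n)) := by
      have h1 : wt fstar F (8 * n) z ≤ totW (wt fstar F (8 * n)) :=
        Finset.single_le_sum (fun _ _ => Nat.zero_le _) (Finset.mem_univ z)
      exact h1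
    have hWm := hpot (8 * n) le_rfl
    have hk2 : 2 * k < 8 * n := by
      by_contra hcon
      push_neg at hcon
      have h4n : 4 * n ≤ k := by omega
      have hchain : (2 : ℕ) ^ (16 * n) * 2 ^ (4 * n) ≤ 5 ^ (8 * n) * 2 ^ n := by
        calc (2 : ℕ) ^ (16 * n) * 2 ^ (4 * n)
            ≤ 2 ^ (16 * n) * 2 ^ k := Nat.mul_le_mul_left _ (Nat.pow_le_pow_right (by norm_num) h4n)
          _ = 4 ^ (8 * n) * 2 ^ k := by
              rw [show (4 : ℕ) = 2 ^ 2 from rfl, ← pow_mul]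
              congr 1
              ring
          _ ≤ 4 ^ (8 * n) * totW (wt fstar F (8 * n)) := Nat.mul_le_mul_left _ hsingle
          _ ≤ 5 ^ (8 * n) * 2 ^ n := hWm
      have hsplitpow : (2 : ℕ) ^ (16 * n) * 2 ^ (4 * n) = 2 ^ (19 * n) * 2 ^ n := by
        rw [← pow_add, ← pow_add]
        congr 1
        ring
      rw [hsplitpow] at hchain
      have h19 : (2 : ℕ) ^ (19 * n) ≤ 5 ^ (8 * n) :=
        Nat.le_of_mul_le_mul_right hchain (Nat.pow_pos (by norm_num))
      have h19' : ((2 : ℕ) ^ 19) ^ n ≤ ((5 : ℕ) ^ 8) ^ n := by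
        rw [← pow_mul, ← pow_mul]
        exact h19
      have hlt : ((5 : ℕ) ^ 8) ^ n < ((2 : ℕ) ^ 19) ^ n := by
        apply Nat.pow_lt_pow_left (by norm_num)
        omega
      omega
    have hcnteq : ((Finset.univ : Finset (Fin (8 * n))).filter
        (fun i => F i.val z = fstar z)).card =
        ((Finset.range (8 * n)).filter (fun i => F i z = fstar z)).card := by
      rw [Finset.card_filter, Finset.card_filter]
      exact Fin.sum_univ_eq_sum_range (fun i => if F i z = fstar z then 1 else 0) (8 * n)
    have hsplitcnt : ((Finset.range (8 * n)).filter (fun i => F i z = fstar z)).card + k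
        = 8 * n := by
      have hcongr : (Finset.range (8 * n)).filter (fun i => ¬ (F i z = fstar z)) =
          (Finset.range (8 * n)).filter (fun i => F i z ≠ fstar z) := by
        apply Finset.filter_congr
        intro i _
        simp
      rw [hkdef, ← hcongr, Finset.card_filter_add_card_filter_not
        (p := fun i : ℕ => F i z = fstar z), Finset.card_range]
    rw [hcnteq]
    rw [div_lt_iff₀ (by norm_num : (0 : ℝ) < 2)]
    exact_mod_cast (by omega :
      (8 * n : ℕ) < ((Finset.range (8 * n)).filter (fun i => F i z = fstar z)).card * 2)
end

section
/- There exists a universal constant c > 0 such that the following holds. Let S be a finite nonempty set of Boolean functions f : {0,1}^n → {0,1}, let f* ∈ S, and let D be any probability distribution over {0,1}^n. Then there exist a function f ∈ S and a certificate C on {0,1}^n of size at most c·(1 + log₂|S|) such that (i) S[C] = {f}, and (ii) Pr_{x∼D}[f(x) ≠ f*(x)] ≤ 1/10. -/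
lemma sum_prod_pow {X : Type*} [Fintype X] (v : X → ℝ) :
    ∀ k : ℕ, ∑ xs : Fin k → X, ∏ i, v (xs i) = (∑ x, v x) ^ k := by
  intro k
  induction k with
  | zero => simp
  | succ k ih =>
    rw [← ((Fin.consEquiv (fun _ : Fin (k+1) => X)).sum_comp (fun xs => ∏ i, v (xs i)))]
    simp only [Fintype.sum_prod_type, Fin.consEquiv_apply]
    simp only [Fin.prod_univ_succ, Fin.cons_zero, Fin.cons_succ]
    rw [pow_succ, mul_comm]
    calc ∑ x : X, ∑ xs : Fin k → X, v x * ∏ i, v (xs i)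
        = ∑ x : X, v x * ∑ xs : Fin k → X, ∏ i, v (xs i) := by
          refine Finset.sum_congr rfl fun x _ => ?_; rw [Finset.mul_sum]
      _ = (∑ x, v x) * (∑ x, v x) ^ k := by rw [← Finset.sum_mul]; rw [ih]

lemma samples_exist {n : ℕ} (S : Finset (Cube n → Bool)) (fstar : Cube n → Bool)
    (D : Cube n → ℝ) (hD0 : ∀ x, 0 ≤ D x) (hD1 : ∑ x, D x = 1) (k : ℕ)
    (hk : (S.card : ℝ) * (9/10) ^ k < 1) :
    ∃ xs : Fin k → Cube n, ∀ g ∈ S,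
      (1/10 : ℝ) < (∑ x ∈ Finset.univ.filter (fun x => g x ≠ fstar x), D x) →
      ∃ i, g (xs i) ≠ fstar (xs i) := by
  by_contra hcon
  push_neg at hcon
  -- for each tuple xs, pick a bad survivor
  have hbad : ∀ xs : Fin k → Cube n, ∃ g ∈ S,
      (1/10 : ℝ) < (∑ x ∈ Finset.univ.filter (fun x => g x ≠ fstar x), D x) ∧
      ∀ i, g (xs i) = fstar (xs i) := by
    intro xs
    obtain ⟨g, hgS, hgerr, hsur⟩ := hcon xs
    exact ⟨g, hgS, hgerr, hsur⟩
  set v : (Cube n → Bool) → Cube n → ℝ :=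
    fun g x => if g x = fstar x then D x else 0 with hv
  have hv0 : ∀ g x, 0 ≤ v g x := by
    intro g x; simp only [hv]; split
    · exact hD0 x
    · exact le_refl 0
  -- each W xs is dominated by the sum over bad g of ∏ v g (xs i)
  have hdom : ∀ xs : Fin k → Cube n, (∏ i, D (xs i)) ≤
      ∑ g ∈ S.filter (fun g => (1/10 : ℝ) < (∑ x ∈ Finset.univ.filter (fun x => g x ≠ fstar x), D x)),
        ∏ i, v g (xs i) := by
    intro xs
    obtain ⟨g, hgS, hgerr, hsur⟩ := hbad xs
    have hmem : g ∈ S.filter (fun g => (1/10 : ℝ) < (∑ x ∈ Finset.univ.filter (fun x => g x ≠ fstar x), D x)) :=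
      Finset.mem_filter.2 ⟨hgS, hgerr⟩
    have heq : (∏ i, D (xs i)) = ∏ i, v g (xs i) := by
      refine Finset.prod_congr rfl fun i _ => ?_
      simp [hv, hsur i]
    rw [heq]
    refine Finset.single_le_sum (fun h _ => Finset.prod_nonneg (fun i _ => hv0 h (xs i))) hmem
  have hsum : (1:ℝ) ≤ ∑ g ∈ S.filter (fun g => (1/10 : ℝ) < (∑ x ∈ Finset.univ.filter (fun x => g x ≠ fstar x), D x)),
      (∑ x, v g x) ^ k := by
    calc (1:ℝ) = (∑ x, D x) ^ k := by rw [hD1]; simp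
      _ = ∑ xs : Fin k → Cube n, ∏ i, D (xs i) := (sum_prod_pow D k).symm
      _ ≤ ∑ xs : Fin k → Cube n, ∑ g ∈ _, ∏ i, v g (xs i) :=
          Finset.sum_le_sum (fun xs _ => hdom xs)
      _ = ∑ g ∈ _, ∑ xs : Fin k → Cube n, ∏ i, v g (xs i) := Finset.sum_comm
      _ = ∑ g ∈ _, (∑ x, v g x) ^ k := by
          refine Finset.sum_congr rfl fun g _ => sum_prod_pow (v g) k
  -- but each bad g has (∑ x, v g x) ≤ 9/10
  have hbound : ∀ g ∈ S.filter (fun g => (1/10 : ℝ) < (∑ x ∈ Finset.univ.filter (fun x => g x ≠ fstar x), D x)),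
      (∑ x, v g x) ^ k ≤ (9/10 : ℝ) ^ k := by
    intro g hg
    obtain ⟨hgS, hgerr⟩ := Finset.mem_filter.1 hg
    have hsplit : (∑ x, v g x) + (∑ x ∈ Finset.univ.filter (fun x => g x ≠ fstar x), D x) = 1 := by
      rw [← hD1]
      have : (∑ x, v g x) = ∑ x ∈ Finset.univ.filter (fun x => g x = fstar x), D x := by
        rw [Finset.sum_filter]
      rw [this, ← Finset.sum_filter_add_sum_filter_not Finset.univ (fun x => g x = fstar x) D]
    have h1 : (∑ x, v g x) ≤ 9/10 := by linarith
    have h2 : 0 ≤ (∑ x, v g x) := Finset.sum_nonneg (fun x _ => hv0 g x)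
    exact pow_le_pow_left₀ h2 h1 k
  have hfin : (1:ℝ) ≤ (S.card : ℝ) * (9/10) ^ k := by
    calc (1:ℝ) ≤ _ := hsum
      _ ≤ ∑ _g ∈ S.filter (fun g => (1/10 : ℝ) < (∑ x ∈ Finset.univ.filter (fun x => g x ≠ fstar x), D x)), (9/10:ℝ)^k :=
          Finset.sum_le_sum hbound
      _ = ((S.filter _).card : ℝ) * (9/10)^k := by rw [Finset.sum_const, nsmul_eq_mul]
      _ ≤ (S.card : ℝ) * (9/10)^k := by
          have := Finset.card_filter_le S (fun g => (1/10 : ℝ) < (∑ x ∈ Finset.univ.filter (fun x => g x ≠ fstar x), D x))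
          have h9 : (0:ℝ) ≤ (9/10)^k := by positivity
          exact mul_le_mul_of_nonneg_right (by exact_mod_cast this) h9
  linarith

lemma halving {n : ℕ} (T : Finset (Cube n → Bool)) : T.Nonempty →
    ∃ f ∈ T, ∃ C : Cube n → Option Bool,
      certSize C ≤ Nat.log 2 T.card ∧
      Consistent f C ∧
      (∀ g ∈ T, Consistent g C → g = f) ∧
      (∀ x b, C x = some b → ∃ g ∈ T, ∃ h ∈ T, g x ≠ h x) := by
  induction T using Finset.strongInduction with
  | _ T ih =>
    intro hT
    by_cases hcard : T.card ≤ 1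
    · have h1 : T.card = 1 := le_antisymm hcard (Finset.Nonempty.card_pos hT)
      obtain ⟨f, hf⟩ := Finset.card_eq_one.1 h1
      refine ⟨f, by simp [hf], fun _ => none, ?_, ?_, ?_, ?_⟩
      · simp [certSize]
      · intro x b h; simp at h
      · intro g hg _; rw [hf] at hg; simpa using hg
      · intro x b h; simp at h
    · push_neg at hcard
      obtain ⟨g, hg, h, hh, hgh⟩ := Finset.one_lt_card.1 hcard
      obtain ⟨x₀, hx₀⟩ := Function.ne_iff.1 hgh
      have hbool : ∀ a c b : Bool, a ≠ c → (a = b ∨ c = b) := by decide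
      have hbool' : ∀ a c b : Bool, a ≠ c → (a ≠ b ∨ c ≠ b) := by decide
      obtain ⟨b, hhalf⟩ : ∃ b : Bool,
          2 * (T.filter (fun t => t x₀ = b)).card ≤ T.card := by
        have hcards : (T.filter (fun t => t x₀ = true)).card
            + (T.filter (fun t => t x₀ = false)).card = T.card := by
          have := Finset.card_filter_add_card_filter_not (s := T)
            (p := fun t => t x₀ = true)
          simpa [Bool.not_eq_true] using this
        by_cases hcmp : (T.filter (fun t => t x₀ = true)).card
            ≤ (T.filter (fun t => t x₀ = false)).card
        · exact ⟨true, by linarith⟩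
        · exact ⟨false, by linarith⟩
      set Tb := T.filter (fun t => t x₀ = b) with hTb
      have hor : g x₀ = b ∨ h x₀ = b := hbool _ _ _ hx₀
      have hTbne : Tb.Nonempty := by
        rcases hor with hx | hx
        · exact ⟨g, Finset.mem_filter.2 ⟨hg, hx⟩⟩
        · exact ⟨h, Finset.mem_filter.2 ⟨hh, hx⟩⟩
      have hnor : g x₀ ≠ b ∨ h x₀ ≠ b := hbool' _ _ _ hx₀
      have hss : Tb ⊂ T := by
        refine Finset.ssubset_iff_of_subset (Finset.filter_subset _ _) |>.2 ?_
        rcases hnor with hx | hx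
        · exact ⟨g, hg, fun hmem => hx (Finset.mem_filter.1 hmem).2⟩
        · exact ⟨h, hh, fun hmem => hx (Finset.mem_filter.1 hmem).2⟩
      obtain ⟨f, hfTb, C', hsize, hconsf, hiso, hP⟩ := ih Tb hss hTbne
      have hfT : f ∈ T := (Finset.mem_filter.1 hfTb).1
      have hfx : f x₀ = b := (Finset.mem_filter.1 hfTb).2
      have hC'x₀ : C' x₀ = none := by
        cases hc : C' x₀ with
        | none => rfl
        | some b' =>
          exfalso
          obtain ⟨g', hg', h', hh', hne⟩ := hP x₀ b' hc
          have e1 : g' x₀ = b := (Finset.mem_filter.1 hg').2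
          have e2 : h' x₀ = b := (Finset.mem_filter.1 hh').2
          rw [e1, e2] at hne; exact hne rfl
      refine ⟨f, hfT, fun x => if x = x₀ then some b else C' x, ?_, ?_, ?_, ?_⟩
      · -- size
        have hsub : (Finset.univ.filter
            (fun x => ((if x = x₀ then some b else C' x) : Option Bool).isSome)) ⊆
            insert x₀ (Finset.univ.filter (fun x => (C' x).isSome)) := by
          intro x hx
          simp only [Finset.mem_filter, Finset.mem_univ, true_and] at hx
          by_cases hxx : x = x₀
          · exact Finset.mem_insert.2 (Or.inl hxx)
          · rw [if_neg hxx] at hx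
            exact Finset.mem_insert.2 (Or.inr (Finset.mem_filter.2 ⟨Finset.mem_univ x, hx⟩))
        have h1 : certSize (fun x => if x = x₀ then some b else C' x) ≤ certSize C' + 1 := by
          calc certSize (fun x => if x = x₀ then some b else C' x)
              ≤ (insert x₀ (Finset.univ.filter (fun x => (C' x).isSome))).card :=
                Finset.card_le_card hsub
            _ ≤ certSize C' + 1 := Finset.card_insert_le _ _
        have h2 : certSize C' + 1 ≤ Nat.log 2 (T.card / 2) + 1 := by
          have hd : Tb.card ≤ T.card / 2 :=
            (Nat.le_div_iff_mul_le two_pos).2 (by linarith)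
          exact Nat.add_le_add_right (le_trans hsize (Nat.log_mono_right hd)) 1
        have h3 : Nat.log 2 (T.card / 2) = Nat.log 2 T.card - 1 := Nat.log_div_base 2 T.card
        have h4 : 1 ≤ Nat.log 2 T.card := Nat.log_pos one_lt_two hcard
        calc certSize (fun x => if x = x₀ then some b else C' x)
            ≤ certSize C' + 1 := h1
          _ ≤ Nat.log 2 (T.card / 2) + 1 := h2
          _ = (Nat.log 2 T.card - 1) + 1 := by rw [h3]
          _ = Nat.log 2 T.card := Nat.sub_add_cancel h4
      · -- Consistent f C
        intro x b' hx
        replace hx : (if x = x₀ then some b else C' x) = some b' := hx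
        by_cases hxx : x = x₀
        · subst hxx
          rw [if_pos rfl] at hx
          rw [hfx]; exact Option.some_injective _ hx
        · rw [if_neg hxx] at hx; exact hconsf x b' hx
      · -- isolation
        intro g' hg' hcons
        have hgx : g' x₀ = b := hcons x₀ b (by
          show (if x₀ = x₀ then some b else C' x₀) = some b
          rw [if_pos rfl])
        have hgTb : g' ∈ Tb := Finset.mem_filter.2 ⟨hg', hgx⟩
        refine hiso g' hgTb ?_
        intro x b'' hx
        have hxne : x ≠ x₀ := by
          rintro rfl; rw [hC'x₀] at hx; cases hx
        exact hcons x b'' (by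
          show (if x = x₀ then some b else C' x) = some b''
          rw [if_neg hxne]; exact hx)
      · -- P
        intro x b'' hx
        replace hx : (if x = x₀ then some b else C' x) = some b'' := hx
        by_cases hxx : x = x₀
        · subst hxx
          exact ⟨g, hg, h, hh, hx₀⟩
        · rw [if_neg hxx] at hx
          obtain ⟨g', hg', h', hh', hne⟩ := hP x b'' hx
          exact ⟨g', (Finset.mem_filter.1 hg').1, h', (Finset.mem_filter.1 hh').1, hne⟩

/-- For every distribution `D` over inputs there is a function `f ∈ S`,
isolated in `S` by a certificate of size `O(log₂ |S|)`, agreeing with `f*`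
except with probability at most `1/10` under `D`. -/
theorem isolated_approximator :
    ∃ c : ℝ, 0 < c ∧
      ∀ (n : ℕ) (S : Finset (Cube n → Bool)), S.Nonempty →
      ∀ fstar : Cube n → Bool, fstar ∈ S →
      ∀ D : Cube n → ℝ, (∀ x, 0 ≤ D x) → (∑ x, D x = 1) →
      ∃ f ∈ S, ∃ C : Cube n → Option Bool,
        (certSize C : ℝ) ≤ c * (1 + Real.logb 2 S.card) ∧
        {g | g ∈ S ∧ Consistent g C} = {f} ∧
        (∑ x ∈ Finset.univ.filter (fun x => f x ≠ fstar x), D x) ≤ 1 / 10 := by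
  refine ⟨8, by norm_num, ?_⟩
  intro n S hS fstar hfs D hD0 hD1
  set L := Nat.log 2 S.card with hL
  set k := 7 * (L + 1) with hkdef
  have hklt : (S.card : ℝ) * (9/10) ^ k < 1 := by
    have hm : S.card < 2 ^ (L + 1) := Nat.lt_pow_succ_log_self (by norm_num) S.card
    have h7 : ((9:ℝ)/10) ^ 7 ≤ 1/2 := by norm_num
    have hpw : ((9:ℝ)/10) ^ k ≤ (1/2) ^ (L + 1) := by
      rw [hkdef, pow_mul]
      exact pow_le_pow_left₀ (by positivity) h7 (L + 1)
    have hmr : (S.card : ℝ) < (2:ℝ) ^ (L + 1) := by exact_mod_cast hm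
    calc (S.card : ℝ) * (9/10) ^ k
        ≤ (S.card : ℝ) * (1/2) ^ (L + 1) := by
          exact mul_le_mul_of_nonneg_left hpw (by positivity)
      _ < (2:ℝ) ^ (L+1) * (1/2) ^ (L + 1) := by
          exact mul_lt_mul_of_pos_right hmr (by positivity)
      _ = 1 := by rw [← mul_pow]; norm_num
  obtain ⟨xs, hxs⟩ := samples_exist S fstar D hD0 hD1 k hklt
  set T' := S.filter (fun g => ∀ i, g (xs i) = fstar (xs i)) with hT'
  have hfsT' : fstar ∈ T' := Finset.mem_filter.2 ⟨hfs, fun i => rfl⟩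
  obtain ⟨f, hfT', C₂, hsize₂, hcons₂, hiso₂, hP₂⟩ := halving T' ⟨fstar, hfsT'⟩
  have hfS : f ∈ S := (Finset.mem_filter.1 hfT').1
  have hfagree : ∀ i, f (xs i) = fstar (xs i) := (Finset.mem_filter.1 hfT').2
  have hC₂none : ∀ x : Cube n, (∃ i, xs i = x) → C₂ x = none := by
    rintro x ⟨i, hi⟩
    cases hc : C₂ x with
    | none => rfl
    | some b =>
      exfalso
      obtain ⟨g', hg', h', hh', hne⟩ := hP₂ x b hc
      have e1 : g' x = fstar x := by rw [← hi]; exact (Finset.mem_filter.1 hg').2 i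
      have e2 : h' x = fstar x := by rw [← hi]; exact (Finset.mem_filter.1 hh').2 i
      rw [e1, e2] at hne; exact hne rfl
  refine ⟨f, hfS, fun x => if h : ∃ i, xs i = x then some (fstar x) else C₂ x, ?_, ?_, ?_⟩
  · -- size bound
    have hsub : (Finset.univ.filter (fun x =>
        ((if h : ∃ i, xs i = x then some (fstar x) else C₂ x) : Option Bool).isSome)) ⊆
        (Finset.image xs Finset.univ) ∪
          (Finset.univ.filter (fun x => (C₂ x).isSome)) := by
      intro x hx
      simp only [Finset.mem_filter, Finset.mem_univ, true_and] at hx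
      by_cases hex : ∃ i, xs i = x
      · exact Finset.mem_union_left _ (Finset.mem_image.2 ⟨Classical.choose hex,
          Finset.mem_univ _, Classical.choose_spec hex⟩)
      · rw [dif_neg hex] at hx
        exact Finset.mem_union_right _ (Finset.mem_filter.2 ⟨Finset.mem_univ x, hx⟩)
    have hnat : certSize (fun x => if h : ∃ i, xs i = x then some (fstar x) else C₂ x)
        ≤ k + L := by
      calc certSize (fun x => if h : ∃ i, xs i = x then some (fstar x) else C₂ x)
          ≤ ((Finset.image xs Finset.univ) ∪
              (Finset.univ.filter (fun x => (C₂ x).isSome))).card :=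
            Finset.card_le_card hsub
        _ ≤ (Finset.image xs Finset.univ).card + certSize C₂ := Finset.card_union_le _ _
        _ ≤ k + L := by
            have h1 : (Finset.image xs Finset.univ).card ≤ k := by
              calc (Finset.image xs Finset.univ).card ≤ (Finset.univ : Finset (Fin k)).card :=
                    Finset.card_image_le
                _ = k := Finset.card_univ.trans (Fintype.card_fin k)
            have h2 : certSize C₂ ≤ L := by
              refine le_trans hsize₂ (Nat.log_mono_right ?_)
              exact Finset.card_le_card (Finset.filter_subset _ _)
            omega
    have hLreal : (L : ℝ) ≤ Real.logb 2 S.card := Real.natLog_le_logb S.card 2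
    calc (certSize (fun x => if h : ∃ i, xs i = x then some (fstar x) else C₂ x) : ℝ)
        ≤ (k + L : ℕ) := by exact_mod_cast hnat
      _ ≤ 8 * (1 + (L:ℝ)) := by
          rw [hkdef]; push_cast; ring_nf; linarith
      _ ≤ 8 * (1 + Real.logb 2 S.card) := by linarith
  · -- isolation
    ext g
    simp only [Set.mem_setOf_eq, Set.mem_singleton_iff]
    constructor
    · rintro ⟨hgS, hgC⟩
      have hagree : ∀ i, g (xs i) = fstar (xs i) := by
        intro i
        refine hgC (xs i) (fstar (xs i)) ?_
        show (if h : ∃ i', xs i' = xs i then some (fstar (xs i)) else C₂ (xs i)) = _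
        rw [dif_pos ⟨i, rfl⟩]
      have hgT' : g ∈ T' := Finset.mem_filter.2 ⟨hgS, hagree⟩
      refine hiso₂ g hgT' ?_
      intro x b hx
      have hnex : ¬∃ i, xs i = x := by
        intro hex; rw [hC₂none x hex] at hx; cases hx
      refine hgC x b ?_
      show (if h : ∃ i, xs i = x then some (fstar x) else C₂ x) = some b
      rw [dif_neg hnex]; exact hx
    · intro hgf
      rw [hgf]
      refine ⟨hfS, ?_⟩
      intro x b hx
      replace hx : (if h : ∃ i, xs i = x then some (fstar x) else C₂ x) = some b := hx
      by_cases hex : ∃ i, xs i = x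
      · rw [dif_pos hex] at hx
        obtain ⟨i, hi⟩ := hex
        have : f x = fstar x := by rw [← hi]; exact hfagree i
        rw [this]; exact Option.some_injective _ hx
      · rw [dif_neg hex] at hx
        exact hcons₂ x b hx
  · -- error bound
    by_contra hbig
    push_neg at hbig
    obtain ⟨i, hi⟩ := hxs f hfS hbig
    exact hi (hfagree i)
end

section
/- (Safe Winnowing Lemma.) Let S be a set of functions f : {0,1}^n → [0,1]. Fix a function f* ∈ S and a subset Y ⊆ {0,1}^n. For a parameter ε > 0, let C be a finite ε-cover for S with |C| ≥ 2, and let k = log₂|C|. Then there exist an f ∈ S and a subset Z ⊆ {0,1}^n of size at most k such that: (i) every g ∈ S that satisfies Δ∞(f,g)[Y ∪ Z] ≤ ε/(5k) also satisfies Δ∞(f,g) ≤ 3ε; and (ii) Δ∞(f,f*)[Y] ≤ ε/5. -/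
/-- Safe Winnowing Lemma: given a finite `ε`-cover `Cov` of `S` (with `k = log₂ |Cov|`),
there is an `f ∈ S` and a set `Z` of at most `k` inputs such that any `g ∈ S`
that is `ε/(5k)`-close to `f` on `Y ∪ Z` is `3ε`-close to `f` everywhere, and
moreover `f` is `ε/5`-close to `f*` on `Y`. -/
theorem safe_winnowing (n : ℕ) (S : Set (Cube n → ℝ))
    (hS : ∀ f ∈ S, ∀ x, f x ∈ Set.Icc (0 : ℝ) 1)
    (fstar : Cube n → ℝ) (hfstar : fstar ∈ S)
    (Y : Finset (Cube n)) (ε : ℝ) (hε : 0 < ε)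
    (Cov : Finset (Cube n → ℝ)) (hCovS : ↑Cov ⊆ S)
    (hCov : ∀ f ∈ S, ∃ g ∈ Cov, ∀ x, |f x - g x| ≤ ε)
    (hCard : 2 ≤ Cov.card) :
    ∃ f ∈ S, ∃ Z : Finset (Cube n),
      (Z.card : ℝ) ≤ Real.logb 2 Cov.card ∧
      (∀ g ∈ S,
        (∀ x ∈ Y ∪ Z, |f x - g x| ≤ ε / (5 * Real.logb 2 Cov.card)) →
        ∀ x, |f x - g x| ≤ 3 * ε) ∧
      (∀ x ∈ Y, |f x - fstar x| ≤ ε / 5) := by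
  classical
  set K := Real.logb 2 (Cov.card : ℝ) with hKdef
  have hCov2 : (2:ℝ) ≤ (Cov.card : ℝ) := by exact_mod_cast hCard
  have hK1 : (1:ℝ) ≤ K := by
    have h2 : Real.logb 2 (2:ℝ) = 1 := Real.logb_self_eq_one (by norm_num)
    rw [hKdef, ← h2]
    exact Real.logb_le_logb_of_le (by norm_num) (by norm_num) hCov2
  have hKpos : (0:ℝ) < K := lt_of_lt_of_le one_pos hK1
  set δ := ε / (5 * K) with hδdef
  have hδpos : 0 < δ := by
    rw [hδdef]; positivity
  have hKδ : K * δ = ε / 5 := by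
    rw [hδdef]; field_simp
  set M := ⌊K⌋₊ with hMdef
  have hMK : (M:ℝ) ≤ K := Nat.floor_le hKpos.le
  set c : ℕ → ℝ := fun j => ε + ((M + 1 - j : ℕ) : ℝ) * δ with hcdef
  have hcε : ∀ j, ε ≤ c j := by
    intro j; simp only [hcdef]
    have : (0:ℝ) ≤ ((M + 1 - j : ℕ) : ℝ) * δ := by positivity
    linarith
  have hcstep : ∀ j, j ≤ M → c j = c (j+1) + δ := by
    intro j hj
    simp only [hcdef]
    have h1 : M + 1 - j = (M + 1 - (j+1)) + 1 := by omega
    rw [h1]; push_cast; ring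
  have hcub : ∀ j, 1 ≤ j → c j ≤ ε + ε/5 := by
    intro j hj
    have h1 : (M + 1 - j : ℕ) ≤ M := by omega
    have h2 : ((M + 1 - j : ℕ) : ℝ) * δ ≤ K * δ := by
      apply mul_le_mul_of_nonneg_right _ hδpos.le
      exact le_trans (by exact_mod_cast h1) hMK
    simp only [hcdef]
    linarith [hKδ]
  have hclow : ∀ j, j ≤ M → ε + δ ≤ c j := by
    intro j hj
    have h1 : (1:ℕ) ≤ M + 1 - j := by omega
    have h2 : (1:ℝ) * δ ≤ ((M + 1 - j : ℕ) : ℝ) * δ := by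
      apply mul_le_mul_of_nonneg_right _ hδpos.le
      exact_mod_cast h1
    simp only [hcdef]
    linarith
  set A : (Cube n → ℝ) → Finset (Cube n) → ℕ → Finset (Cube n → ℝ) :=
    fun f Z j => Cov.filter (fun h => ∀ x ∈ Y ∪ Z, |f x - h x| ≤ c j) with hAdef
  have aux : ∀ N : ℕ, ∀ f ∈ S, ∀ Z : Finset (Cube n), ∀ j : ℕ,
      j ≤ M → Z.card ≤ j → (∀ x ∈ Y, |f x - fstar x| ≤ (j:ℝ) * δ) →
      (A f Z j).card ≤ N → (A f Z j).card * 2 ^ j ≤ Cov.card →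
      ∃ f' ∈ S, ∃ Z' : Finset (Cube n),
        (Z'.card : ℝ) ≤ K ∧
        (∀ g ∈ S, (∀ x ∈ Y ∪ Z', |f' x - g x| ≤ δ) →
          ∀ x, |f' x - g x| ≤ 3 * ε) ∧
        (∀ x ∈ Y, |f' x - fstar x| ≤ ε / 5) := by
    intro N
    induction N using Nat.strong_induction_on with
    | _ N ih =>
      intro f hf Z j hjM hZc hYc h4 h5
      by_cases hdone : ∀ g ∈ S, (∀ x ∈ Y ∪ Z, |f x - g x| ≤ δ) → ∀ x, |f x - g x| ≤ 3 * ε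
      · refine ⟨f, hf, Z, ?_, hdone, ?_⟩
        · calc (Z.card : ℝ) ≤ (j:ℝ) := by exact_mod_cast hZc
            _ ≤ (M:ℝ) := by exact_mod_cast hjM
            _ ≤ K := hMK
        · intro x hx
          have h1 := hYc x hx
          have h2 : (j:ℝ) * δ ≤ K * δ := by
            apply mul_le_mul_of_nonneg_right _ hδpos.le
            calc (j:ℝ) ≤ (M:ℝ) := by exact_mod_cast hjM
              _ ≤ K := hMK
          linarith [hKδ]
      · push_neg at hdone
        obtain ⟨g, hg, hgclose, z, hz⟩ := hdone
        obtain ⟨p, hpCov, hp⟩ := hCov f hf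
        obtain ⟨q, hqCov, hq⟩ := hCov g hg
        have hpA : p ∈ A f Z j := by
          simp only [hAdef, Finset.mem_filter]
          exact ⟨hpCov, fun x _ => le_trans (hp x) (hcε j)⟩
        have hqA : q ∈ A f Z j := by
          simp only [hAdef, Finset.mem_filter]
          refine ⟨hqCov, fun x hx => ?_⟩
          have h1 := hgclose x hx
          have h2 := hq x
          have h3 := hclow j hjM
          have h4 := abs_sub_le (f x) (g x) (q x)
          linarith
        have hpq : p ≠ q := by
          intro hpq
          subst hpq
          have h1 := hp z
          have h2 := hq z
          have h3 := abs_sub_le (f z) (p z) (g z)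
          have h4 : |p z - g z| = |g z - p z| := abs_sub_comm _ _
          linarith
        have hA2 : 2 ≤ (A f Z j).card := Finset.one_lt_card.mpr ⟨p, hpA, q, hqA, hpq⟩
        have h2j : 2 ^ (j+1) ≤ Cov.card := by
          calc 2 ^ (j+1) = 2 * 2 ^ j := by ring
            _ ≤ (A f Z j).card * 2 ^ j := Nat.mul_le_mul_right _ hA2
            _ ≤ Cov.card := h5
        have hj1M : j + 1 ≤ M := by
          have h1 : ((2:ℝ) ^ (j+1)) ≤ (Cov.card : ℝ) := by exact_mod_cast h2j
          have h2 : Real.logb 2 ((2:ℝ) ^ (j+1)) ≤ K := by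
            rw [hKdef]
            exact Real.logb_le_logb_of_le (by norm_num) (by positivity) h1
          rw [Real.logb_pow, Real.logb_self_eq_one (by norm_num)] at h2
          apply Nat.le_floor
          push_cast
          push_cast at h2
          linarith
        have hsum : ((A f Z j).filter (fun h => |f z - h z| ≤ c (j+1))).card
            + ((A f Z j).filter (fun h => |g z - h z| ≤ c (j+1))).card ≤ (A f Z j).card := by
          have hdisj : Disjoint ((A f Z j).filter (fun h => |f z - h z| ≤ c (j+1)))
              ((A f Z j).filter (fun h => |g z - h z| ≤ c (j+1))) := by
            rw [Finset.disjoint_left]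
            intro h hhf hhg
            simp only [Finset.mem_filter] at hhf hhg
            have h1 : |f z - g z| ≤ |f z - h z| + |g z - h z| := by
              have h2 := abs_sub_le (f z) (h z) (g z)
              rw [abs_sub_comm (h z) (g z)] at h2
              exact h2
            have hc1 : c (j+1) ≤ ε + ε/5 := hcub (j+1) (by omega)
            have hb1 : |f z - h z| ≤ ε + ε/5 := le_trans hhf.2 hc1
            have hb2 : |g z - h z| ≤ ε + ε/5 := le_trans hhg.2 hc1
            linarith
          rw [← Finset.card_union_of_disjoint hdisj]
          exact Finset.card_le_card (Finset.union_subset (Finset.filter_subset _ _)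
            (Finset.filter_subset _ _))
        have step : ∀ f', f' ∈ S → (∀ x ∈ Y ∪ Z, |f x - f' x| ≤ δ) →
            2 * ((A f Z j).filter (fun h => |f' z - h z| ≤ c (j+1))).card ≤ (A f Z j).card →
            ∃ f'' ∈ S, ∃ Z' : Finset (Cube n),
              (Z'.card : ℝ) ≤ K ∧
              (∀ g ∈ S, (∀ x ∈ Y ∪ Z', |f'' x - g x| ≤ δ) →
                ∀ x, |f'' x - g x| ≤ 3 * ε) ∧
              (∀ x ∈ Y, |f'' x - fstar x| ≤ ε / 5) := by
          intro f' hf'S hmove hhalf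
          have hsub : A f' (insert z Z) (j+1) ⊆
              (A f Z j).filter (fun h => |f' z - h z| ≤ c (j+1)) := by
            intro h hh
            simp only [hAdef, Finset.mem_filter] at hh ⊢
            obtain ⟨hhCov, hhclose⟩ := hh
            have hz' : |f' z - h z| ≤ c (j+1) := by
              apply hhclose z
              simp [Finset.mem_union, Finset.mem_insert]
            refine ⟨⟨hhCov, fun x hx => ?_⟩, hz'⟩
            have hx' : x ∈ Y ∪ insert z Z := by
              rcases Finset.mem_union.mp hx with h1 | h1
              · exact Finset.mem_union.mpr (Or.inl h1)
              · exact Finset.mem_union.mpr (Or.inr (Finset.mem_insert_of_mem h1))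
            have h1 : |f' x - h x| ≤ c (j+1) := hhclose x hx'
            have h2 := hmove x hx
            have h3 := abs_sub_le (f x) (f' x) (h x)
            rw [hcstep j hjM]
            linarith
          have hcard' : (A f' (insert z Z) (j+1)).card
              ≤ ((A f Z j).filter (fun h => |f' z - h z| ≤ c (j+1))).card :=
            Finset.card_le_card hsub
          have hlt : (A f' (insert z Z) (j+1)).card < N := by linarith
          have h5' : (A f' (insert z Z) (j+1)).card * 2 ^ (j+1) ≤ Cov.card := by
            calc (A f' (insert z Z) (j+1)).card * 2 ^ (j+1)
                = (2 * (A f' (insert z Z) (j+1)).card) * 2 ^ j := by ring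
              _ ≤ (A f Z j).card * 2 ^ j := by
                  apply Nat.mul_le_mul_right
                  linarith
              _ ≤ Cov.card := h5
          have hY' : ∀ x ∈ Y, |f' x - fstar x| ≤ ((j+1 : ℕ):ℝ) * δ := by
            intro x hx
            have h1 := hYc x hx
            have h2 := hmove x (Finset.mem_union.mpr (Or.inl hx))
            have h3 := abs_sub_le (f' x) (f x) (fstar x)
            rw [abs_sub_comm (f' x) (f x)] at h3
            push_cast
            linarith
          have hZ' : (insert z Z).card ≤ j + 1 := by
            calc (insert z Z).card ≤ Z.card + 1 := Finset.card_insert_le _ _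
              _ ≤ j + 1 := by exact Nat.succ_le_succ hZc
          exact ih _ hlt f' hf'S (insert z Z) (j+1) hj1M hZ' hY' le_rfl h5'
        rcases le_total ((A f Z j).filter (fun h => |f z - h z| ≤ c (j+1))).card
            ((A f Z j).filter (fun h => |g z - h z| ≤ c (j+1))).card with hle | hle
        · refine step f hf (fun x _ => ?_) (by linarith)
          simp [hδpos.le]
        · exact step g hg hgclose (by linarith)
  have hAsub : (A fstar ∅ 0).card * 2 ^ 0 ≤ Cov.card := by
    simp only [pow_zero, mul_one]
    exact Finset.card_le_card (Finset.filter_subset _ _)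
  obtain ⟨f, hf, Z, h1, h2, h3⟩ := aux (A fstar ∅ 0).card fstar hfstar ∅ 0 (Nat.zero_le M)
    (by simp) (by simp) le_rfl hAsub
  exact ⟨f, hf, Z, h1, h2, h3⟩
end

section
/- Let n, p ≥ 1 be integers, let δ, ε > 0, and let W := ⌈2p/δ⌉. Let S be a set of functions f : {0,1}^n → [0,1], and suppose S has no ε-cover of cardinality at most (2^n · W)^p. Then there exists a nonempty subset S' ⊆ S such that for every f ∈ S' and every subset X ⊆ {0,1}^n of size p, there exists g ∈ S' with Δ₁(f,g)[X] ≤ δ and Δ∞(f,g) > ε. -/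
/-- If `S` has no `ε`-cover of cardinality at most `(2^n · W)^p` with
`W = ⌈2p/δ⌉`, then there is a nonempty `S' ⊆ S` such that no `f ∈ S'` can be
pinned down within `L∞`-distance `ε` by `Δ₁`-constraints on `p` inputs. -/
theorem no_l1_winnowing_without_cover
    (n p : ℕ) (hn : 1 ≤ n) (hp : 1 ≤ p) (δ ε : ℝ) (hδ : 0 < δ) (hε : 0 < ε)
    (S : Set (Cube n → ℝ))
    (hS : ∀ f ∈ S, ∀ x, f x ∈ Set.Icc (0 : ℝ) 1)
    (hnc : ¬ ∃ Cov : Finset (Cube n → ℝ), ↑Cov ⊆ S ∧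
      Cov.card ≤ (2 ^ n * ⌈(2 * p : ℝ) / δ⌉₊) ^ p ∧
      ∀ f ∈ S, ∃ g ∈ Cov, ∀ x, |f x - g x| ≤ ε) :
    ∃ S' : Set (Cube n → ℝ), S' ⊆ S ∧ S'.Nonempty ∧
      ∀ f ∈ S', ∀ X : Finset (Cube n), X.card = p →
        ∃ g ∈ S', (∑ x ∈ X, |f x - g x|) ≤ δ ∧ ∃ x, ε < |f x - g x| := by
  classical
  by_contra hgoal
  push_neg at hgoal
  set W : ℕ := ⌈(2 * p : ℝ) / δ⌉₊ with hWdef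
  have hW0 : 0 < W := Nat.ceil_pos.mpr (by positivity)
  have hWpos : (0 : ℝ) < W := by exact_mod_cast hW0
  have hWle : (2 * p : ℝ) / δ ≤ W := Nat.le_ceil _
  -- buckets
  set b : ℝ → Fin W := fun r =>
    ⟨min (W - 1) ⌊r * W⌋₊, lt_of_le_of_lt (min_le_left _ _) (Nat.sub_lt hW0 one_pos)⟩ with hbdef
  have bbound : ∀ r : ℝ, r ∈ Set.Icc (0 : ℝ) 1 →
      ((b r).1 : ℝ) / W ≤ r ∧ r ≤ (((b r).1 : ℝ) + 1) / W := by
    intro r hr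
    constructor
    · rw [div_le_iff₀ hWpos]
      calc ((b r).1 : ℝ) ≤ (⌊r * W⌋₊ : ℝ) := by
            exact_mod_cast Nat.cast_le.mpr (min_le_right _ _)
        _ ≤ r * W := Nat.floor_le (mul_nonneg hr.1 hWpos.le)
    · rw [le_div_iff₀ hWpos]
      rcases le_or_gt ⌊r * W⌋₊ (W - 1) with h | h
      · have hb : (b r).1 = ⌊r * W⌋₊ := min_eq_right h
        rw [hb]
        have h2 := Nat.lt_floor_add_one (r * W)
        push_cast at h2 ⊢
        linarith
      · have hb : (b r).1 = W - 1 := min_eq_left (le_of_lt h)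
        rw [hb]
        have h1 : ((W - 1 : ℕ) : ℝ) = (W : ℝ) - 1 := by
          rw [Nat.cast_sub hW0]; norm_num
        rw [h1]
        nlinarith [hr.2]
  have hbucket : ∀ r s : ℝ, r ∈ Set.Icc (0 : ℝ) 1 → s ∈ Set.Icc (0 : ℝ) 1 →
      b r = b s → |r - s| ≤ 1 / W := by
    intro r s hr hs hbs
    obtain ⟨h1, h2⟩ := bbound r hr
    obtain ⟨h3, h4⟩ := bbound s hs
    have hv : (((b r).1 : ℕ) : ℝ) = ((b s).1 : ℝ) := by exact_mod_cast congrArg Fin.val hbs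
    rw [hv] at h1 h2
    have e2 : (((b s).1 : ℝ)) / W + 1 / W = (((b s).1 : ℝ) + 1) / W := by ring
    rw [abs_sub_le_iff]
    constructor <;> linarith
  -- choice of peeling data
  have key : ∀ S' : Set (Cube n → ℝ), ∃ fX : (Cube n → ℝ) × Finset (Cube n),
      S' ⊆ S → S'.Nonempty → fX.1 ∈ S' ∧ fX.2.card = p ∧
        ∀ g ∈ S', (∑ x ∈ fX.2, |fX.1 x - g x|) ≤ δ → ∀ x, |fX.1 x - g x| ≤ ε := by
    intro S'
    by_cases h1 : S' ⊆ S
    · by_cases h2 : S'.Nonempty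
      · obtain ⟨f, hf, X, hX, hg⟩ := hgoal S' h1 h2
        exact ⟨(f, X), fun _ _ => ⟨hf, hX, hg⟩⟩
      · exact ⟨((fun _ => 0), ∅), fun _ h => absurd h h2⟩
    · exact ⟨((fun _ => 0), ∅), fun h => absurd h h1⟩
  choose FX hkey using key
  -- the peeling process
  set step : Set (Cube n → ℝ) → Set (Cube n → ℝ) :=
    fun S' => {g ∈ S' | δ < ∑ x ∈ (FX S').2, |(FX S').1 x - g x|} with hstepdef
  set T : ℕ → Set (Cube n → ℝ) := fun i => step^[i] S with hTdef
  have hT0 : T 0 = S := rfl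
  have hTstep : ∀ i, T (i + 1) = step (T i) := fun i => Function.iterate_succ_apply' step i S
  have hdec : ∀ i, T (i + 1) ⊆ T i := by
    intro i; rw [hTstep]; exact fun g hg => hg.1
  have hmono : Antitone T := antitone_nat_of_succ_le hdec
  have hTsub : ∀ i, T i ⊆ S := by
    intro i
    induction i with
    | zero => exact subset_rfl
    | succ k ih => exact (hdec k).trans ih
  set M : ℕ := (2 ^ n * W) ^ p with hMdef
  -- signatures
  set sig : ℕ → Finset (Cube n × Fin W) :=
    fun i => (FX (T i)).2.image (fun x => (x, b ((FX (T i)).1 x))) with hsigdef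
  have hpairinj : ∀ (h : Cube n → Fin W), Function.Injective (fun x => (x, h x)) := by
    intro h x y hxy
    simpa using congrArg Prod.fst hxy
  -- the process terminates within M steps
  have hTM : T M = ∅ := by
    rw [← Set.not_nonempty_iff_eq_empty]
    intro hTMne
    have hne : ∀ i ≤ M, (T i).Nonempty := fun i hi => hTMne.mono (hmono hi)
    have hkeyi : ∀ i ≤ M, (FX (T i)).1 ∈ T i ∧ (FX (T i)).2.card = p ∧
        ∀ g ∈ T i, (∑ x ∈ (FX (T i)).2, |(FX (T i)).1 x - g x|) ≤ δ →
          ∀ x, |(FX (T i)).1 x - g x| ≤ ε :=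
      fun i hi => hkey (T i) (hTsub i) (hne i hi)
    have claim : ∀ i j, i < j → j ≤ M → sig i ≠ sig j := by
      intro i j hij hjM heq
      obtain ⟨hfi, hXi, _⟩ := hkeyi i ((le_of_lt hij).trans hjM)
      obtain ⟨hfj, hXj, _⟩ := hkeyi j hjM
      have hfj' : (FX (T j)).1 ∈ step (T i) := by
        rw [← hTstep]; exact hmono (Nat.succ_le_of_lt hij) hfj
      have hδlt : δ < ∑ x ∈ (FX (T i)).2, |(FX (T i)).1 x - (FX (T j)).1 x| := hfj'.2
      -- buckets agree on (FX (T i)).2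
      have hbeq : ∀ x ∈ (FX (T i)).2, b ((FX (T i)).1 x) = b ((FX (T j)).1 x) := by
        intro x hx
        have hmem : (x, b ((FX (T i)).1 x)) ∈ sig j := by
          rw [← heq]
          simp only [hsigdef, Finset.mem_image]
          exact ⟨x, hx, rfl⟩
        simp only [hsigdef, Finset.mem_image] at hmem
        obtain ⟨x', hx', hxx'⟩ := hmem
        have hfst : x' = x := congrArg Prod.fst hxx'
        subst hfst
        exact (congrArg Prod.snd hxx').symm
      have hsum : (∑ x ∈ (FX (T i)).2, |(FX (T i)).1 x - (FX (T j)).1 x|) ≤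
          (FX (T i)).2.card • (1 / (W : ℝ)) := by
        apply Finset.sum_le_card_nsmul
        intro x hx
        exact hbucket _ _ (hS _ (hTsub i hfi) x) (hS _ (hTsub j hfj) x) (hbeq x hx)
      rw [hXi, nsmul_eq_mul] at hsum
      have hpW : (p : ℝ) * (1 / W) ≤ δ / 2 := by
        rw [div_le_iff₀ hδ] at hWle
        rw [mul_one_div, div_le_iff₀ hWpos]
        nlinarith
      linarith
    have hcard : (Finset.range (M + 1)).card = ((Finset.range (M + 1)).image sig).card := by
      rw [Finset.card_image_of_injOn]
      intro i hi j hj hije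
      by_contra hne
      rcases Ne.lt_or_gt hne with h | h
      · exact claim i j h (Nat.lt_succ_iff.mp (Finset.mem_range.mp hj)) hije
      · exact claim j i h (Nat.lt_succ_iff.mp (Finset.mem_range.mp hi)) hije.symm
    have hsubp : (Finset.range (M + 1)).image sig ⊆
        Finset.powersetCard p (Finset.univ : Finset (Cube n × Fin W)) := by
      intro s hs
      obtain ⟨i, hi, rfl⟩ := Finset.mem_image.mp hs
      rw [Finset.mem_powersetCard_univ]
      simp only [hsigdef]
      rw [Finset.card_image_of_injective _ (hpairinj _)]
      exact (hkeyi i (Nat.lt_succ_iff.mp (Finset.mem_range.mp hi))).2.1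
    have hcount : M + 1 ≤ M := by
      calc M + 1 = (Finset.range (M + 1)).card := by rw [Finset.card_range]
        _ = ((Finset.range (M + 1)).image sig).card := hcard
        _ ≤ (Finset.powersetCard p (Finset.univ : Finset (Cube n × Fin W))).card :=
            Finset.card_le_card hsubp
        _ = (Fintype.card (Cube n × Fin W)).choose p := by
            rw [Finset.card_powersetCard, Finset.card_univ]
        _ = (2 ^ n * W).choose p := by
            congr 1
            rw [Fintype.card_prod, Fintype.card_fin, Fintype.card_fun,
              Fintype.card_bool, Fintype.card_fin]
        _ ≤ (2 ^ n * W) ^ p := Nat.choose_le_pow _ _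
        _ = M := rfl
    omega
  -- build the cover
  set Cov : Finset (Cube n → ℝ) :=
    ((Finset.range M).filter (fun i => (T i).Nonempty)).image (fun i => (FX (T i)).1)
    with hCovdef
  apply hnc
  refine ⟨Cov, ?_, ?_, ?_⟩
  · intro g hg
    simp only [hCovdef, Finset.coe_image, Set.mem_image, Finset.mem_coe,
      Finset.mem_filter] at hg
    obtain ⟨i, ⟨hi, hine⟩, rfl⟩ := hg
    exact hTsub i (hkey (T i) (hTsub i) hine).1
  · calc Cov.card ≤ ((Finset.range M).filter (fun i => (T i).Nonempty)).card :=
        Finset.card_image_le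
      _ ≤ (Finset.range M).card := Finset.card_filter_le _ _
      _ = M := Finset.card_range M
  · intro f hf
    have hex : ∃ i, f ∉ T i := ⟨M, by rw [hTM]; exact Set.notMem_empty f⟩
    set N := Nat.find hex with hNdef
    have hNspec : f ∉ T N := Nat.find_spec hex
    have hN0 : N ≠ 0 := by
      intro h
      rw [h, hT0] at hNspec
      exact hNspec hf
    obtain ⟨k, hk⟩ : ∃ k, N = k + 1 := ⟨N - 1, by omega⟩
    have hfk : f ∈ T k := by
      have := Nat.find_min hex (by omega : k < N)
      simpa using this
    have hNM : N ≤ M := Nat.find_le (by rw [hTM]; exact Set.notMem_empty f)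
    have hkM : k < M := by omega
    have hkne : (T k).Nonempty := ⟨f, hfk⟩
    have hsum : (∑ x ∈ (FX (T k)).2, |(FX (T k)).1 x - f x|) ≤ δ := by
      by_contra hlt
      push_neg at hlt
      apply hNspec
      rw [hk, hTstep]
      exact ⟨hfk, hlt⟩
    refine ⟨(FX (T k)).1, ?_, ?_⟩
    · simp only [hCovdef, Finset.mem_image, Finset.mem_filter, Finset.mem_range]
      exact ⟨k, ⟨hkM, hkne⟩, rfl⟩
    · intro x
      rw [abs_sub_comm]
      exact (hkey (T k) (hTsub k) hkne).2.2 f hfk hsum x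
end

section
/- Let n ≥ 1 and t ≥ 4 be integers, and let S be a set of Boolean functions f : {0,1}^n → {0,1} with |S| ≥ 2^t. Then there exists a nonempty subset S' ⊆ S such that for every certificate C on {0,1}^n of size at most t/(2n+2), it is not the case that |S'[C]| = 1; that is, no function in S' can be isolated in S' by a certificate of size at most t/(2n+2). -/
open Classical in
noncomputable def pick {n : ℕ} (C : Cube n → Option Bool) : Cube n :=
  if h : ∃ x, (C x).isSome then h.choose else fun _ => false

lemma pick_spec {n : ℕ} {C : Cube n → Option Bool} (h : ∃ x, (C x).isSome) :
    (C (pick C)).isSome := by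
  rw [pick, dif_pos h]; exact h.choose_spec

lemma certSize_ne_zero {n : ℕ} {C : Cube n → Option Bool} (h : certSize C ≠ 0) :
    ∃ x, (C x).isSome := by
  obtain ⟨x, hx⟩ := Finset.card_pos.mp (Nat.pos_of_ne_zero h)
  exact ⟨x, (Finset.mem_filter.mp hx).2⟩

lemma supp_update {n : ℕ} (C : Cube n → Option Bool) (x : Cube n) :
    (Finset.univ.filter (fun y => ((Function.update C x none) y).isSome))
      = (Finset.univ.filter (fun y => (C y).isSome)).erase x := by
  ext y
  by_cases hy : y = x
  · subst hy; simp [Function.update_self]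
  · simp [Function.update_of_ne hy, hy]

open Classical in
lemma count_certs (n k : ℕ) :
    (Finset.univ.filter (fun C : Cube n → Option Bool => certSize C ≤ k)).card
      ≤ (2 ^ (n + 2)) ^ k := by
  classical
  induction k with
  | zero =>
    have hsub : (Finset.univ.filter (fun C : Cube n → Option Bool => certSize C ≤ 0))
        ⊆ {fun _ => none} := by
      intro C hC
      have h0 : certSize C = 0 := Nat.le_zero.mp (Finset.mem_filter.mp hC).2
      have : ∀ x, C x = none := by
        intro x
        by_contra hx
        have hx' : (C x).isSome := Option.ne_none_iff_isSome.mp hx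
        have : x ∈ Finset.univ.filter (fun y => (C y).isSome) := by
          simp [hx']
        rw [certSize, Finset.card_eq_zero] at h0
        simp [h0] at this
      simp only [Finset.mem_singleton]
      funext x; exact this x
    calc _ ≤ ({fun _ => none} : Finset (Cube n → Option Bool)).card :=
            Finset.card_le_card hsub
      _ = 1 := Finset.card_singleton _
      _ ≤ _ := by simp
  | succ k ih =>
    set A := Finset.univ.filter (fun C : Cube n → Option Bool => certSize C ≤ k + 1) with hA
    set B := Finset.univ.filter (fun C : Cube n → Option Bool => certSize C ≤ k) with hB
    have hsplit := Finset.card_filter_add_card_filter_not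
      (s := A) (p := fun C => certSize C = 0)
    have h1 : (A.filter (fun C => certSize C = 0)).card ≤ 1 := by
      apply Finset.card_le_one.mpr
      intro C hC D hD
      have hC0 : certSize C = 0 := (Finset.mem_filter.mp hC).2
      have hD0 : certSize D = 0 := (Finset.mem_filter.mp hD).2
      have hz : ∀ (E : Cube n → Option Bool), certSize E = 0 → E = fun _ => none := by
        intro E hE
        funext x
        by_contra hx
        have hx' : (E x).isSome := Option.ne_none_iff_isSome.mp hx
        have : x ∈ Finset.univ.filter (fun y => (E y).isSome) := by simp [hx']
        rw [certSize, Finset.card_eq_zero] at hE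
        simp [hE] at this
      rw [hz C hC0, hz D hD0]
    -- the nonzero part injects into B × (Cube n × Bool)
    have h2 : (A.filter (fun C => ¬ certSize C = 0)).card
        ≤ (B ×ˢ (Finset.univ : Finset (Cube n × Bool))).card := by
      apply Finset.card_le_card_of_injOn
        (fun C => (Function.update C (pick C) none, (pick C, (C (pick C)).getD false)))
      · intro C hC
        obtain ⟨hCA, hC0⟩ := Finset.mem_filter.mp hC
        have hCk : certSize C ≤ k + 1 := (Finset.mem_filter.mp hCA).2
        have hex : ∃ x, (C x).isSome := certSize_ne_zero hC0
        have hps := pick_spec hex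
        have hpm : pick C ∈ Finset.univ.filter (fun y => (C y).isSome) := by simp [hps]
        have hsz : certSize (Function.update C (pick C) none) ≤ k := by
          rw [certSize, supp_update, Finset.card_erase_of_mem hpm]
          rw [certSize] at hCk
          omega
        simp [Finset.mem_product, hB, hsz]
      · intro C1 h1' C2 h2' heq
        simp only [Prod.mk.injEq] at heq
        obtain ⟨hu, hp, hv⟩ := heq
        have hex1 : ∃ x, (C1 x).isSome := certSize_ne_zero (Finset.mem_filter.mp h1').2
        have hex2 : ∃ x, (C2 x).isSome := certSize_ne_zero (Finset.mem_filter.mp h2').2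
        have hs1 := pick_spec hex1
        have hs2 := pick_spec hex2
        funext y
        by_cases hy : y = pick C1
        · subst hy
          obtain ⟨b1, hb1⟩ := Option.isSome_iff_exists.mp hs1
          have hs2' : (C2 (pick C1)).isSome := hp ▸ hs2
          obtain ⟨b2, hb2⟩ := Option.isSome_iff_exists.mp hs2'
          rw [hb1, hb2]
          rw [hb1, ← hp, hb2] at hv
          simp only [Option.getD_some] at hv
          rw [hv]
        · have := congrFun hu y
          rwa [Function.update_of_ne hy, Function.update_of_ne (hp ▸ hy)] at this
    have h3 : (B ×ˢ (Finset.univ : Finset (Cube n × Bool))).card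
        = B.card * 2 ^ (n + 1) := by
      rw [Finset.card_product, Finset.card_univ]
      congr 1
      simp [pow_succ]
    have hpos : 1 ≤ (2 ^ (n + 2)) ^ k := Nat.one_le_pow _ _ (by positivity)
    have hBk : B.card ≤ (2 ^ (n + 2)) ^ k := ih
    have : A.card ≤ 1 + B.card * 2 ^ (n + 1) := by omega
    calc A.card ≤ 1 + B.card * 2 ^ (n + 1) := this
      _ ≤ 1 + (2 ^ (n + 2)) ^ k * 2 ^ (n + 1) :=
          by have := Nat.mul_le_mul_right (2 ^ (n + 1)) hBk; omega
      _ ≤ (2 ^ (n + 2)) ^ (k + 1) := by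
          have h4 : 1 ≤ (2 ^ (n + 2) : ℕ) ^ k * 2 ^ (n + 1) :=
            Nat.one_le_iff_ne_zero.mpr (by positivity)
          have e : (2:ℕ) ^ (n + 2) = 2 ^ (n + 1) + 2 ^ (n + 1) := by
            rw [pow_succ]; ring
          calc 1 + (2 ^ (n + 2) : ℕ) ^ k * 2 ^ (n + 1)
              ≤ (2 ^ (n + 2) : ℕ) ^ k * 2 ^ (n + 1)
                + (2 ^ (n + 2)) ^ k * 2 ^ (n + 1) := by omega
            _ = (2 ^ (n + 2)) ^ k * (2 ^ (n + 1) + 2 ^ (n + 1)) := by ring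
            _ = (2 ^ (n + 2)) ^ k * 2 ^ (n + 2) := by rw [← e]
            _ = (2 ^ (n + 2)) ^ (k + 1) := (pow_succ _ _).symm

open Classical in
lemma winnow {n : ℕ} (k : ℕ) :
    ∀ S : Finset (Cube n → Bool),
      (Finset.univ.filter (fun C : Cube n → Option Bool =>
          certSize C ≤ k ∧ ∃ f ∈ S, Consistent f C)).card < S.card →
      ∃ S' : Finset (Cube n → Bool), S' ⊆ S ∧ S'.Nonempty ∧
        ∀ C : Cube n → Option Bool, certSize C ≤ k →
          ¬ ∃ f : Cube n → Bool, {g | g ∈ S' ∧ Consistent g C} = {f} := by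
  classical
  intro S
  induction S using Finset.strongInduction with
  | _ S ih =>
    intro hlt
    by_cases hall : ∀ C : Cube n → Option Bool, certSize C ≤ k →
        ¬ ∃ f : Cube n → Bool, {g | g ∈ S ∧ Consistent g C} = {f}
    · exact ⟨S, subset_rfl, Finset.card_pos.mp (lt_of_le_of_lt (Nat.zero_le _) hlt), hall⟩
    · push_neg at hall
      obtain ⟨C0, hC0size, f0, hf0⟩ := hall
      have hmem : ∀ g, (g ∈ S ∧ Consistent g C0) ↔ g = f0 := by
        intro g
        have := Set.ext_iff.mp hf0 g
        simpa using this
      have hf0S : f0 ∈ S ∧ Consistent f0 C0 := (hmem f0).mpr rfl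
      set T := S.erase f0 with hT
      have hTs : T ⊂ S := Finset.erase_ssubset hf0S.1
      have hC0mem : C0 ∈ Finset.univ.filter (fun C : Cube n → Option Bool =>
          certSize C ≤ k ∧ ∃ f ∈ S, Consistent f C) := by
        simp only [Finset.mem_filter, Finset.mem_univ, true_and]
        exact ⟨hC0size, f0, hf0S.1, hf0S.2⟩
      have hsub : (Finset.univ.filter (fun C : Cube n → Option Bool =>
            certSize C ≤ k ∧ ∃ f ∈ T, Consistent f C))
          ⊆ (Finset.univ.filter (fun C : Cube n → Option Bool =>
            certSize C ≤ k ∧ ∃ f ∈ S, Consistent f C)).erase C0 := by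
        intro C hC
        simp only [Finset.mem_filter, Finset.mem_univ, true_and] at hC
        obtain ⟨hCk, f, hfT, hfC⟩ := hC
        have hfS : f ∈ S := Finset.mem_of_mem_erase hfT
        rw [Finset.mem_erase]
        refine ⟨?_, ?_⟩
        · intro hCC0
          subst hCC0
          have : f = f0 := (hmem f).mp ⟨hfS, hfC⟩
          exact (Finset.ne_of_mem_erase hfT) this
        · simp only [Finset.mem_filter, Finset.mem_univ, true_and]
          exact ⟨hCk, f, hfS, hfC⟩
      have hcard : (Finset.univ.filter (fun C : Cube n → Option Bool =>
            certSize C ≤ k ∧ ∃ f ∈ T, Consistent f C)).card < T.card := by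
        have h1 := Finset.card_le_card hsub
        have h2 := Finset.card_erase_of_mem hC0mem
        have h3 : T.card = S.card - 1 := Finset.card_erase_of_mem hf0S.1
        have h4 : 1 ≤ (Finset.univ.filter (fun C : Cube n → Option Bool =>
            certSize C ≤ k ∧ ∃ f ∈ S, Consistent f C)).card :=
          Finset.card_pos.mpr ⟨C0, hC0mem⟩
        omega
      obtain ⟨S', hS'T, hS'ne, hS'iso⟩ := ih T hTs hcard
      exact ⟨S', hS'T.trans (Finset.erase_subset _ _), hS'ne, hS'iso⟩

/-- If `|S| ≥ 2^t`, then some nonempty subclass `S' ⊆ S` has no function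
isolatable in `S'` by a certificate of size at most `t/(2n+2)`. -/
theorem large_class_not_winnowable (n t : ℕ) (hn : 1 ≤ n) (ht : 4 ≤ t)
    (S : Finset (Cube n → Bool)) (hS : 2 ^ t ≤ S.card) :
    ∃ S' : Finset (Cube n → Bool), S' ⊆ S ∧ S'.Nonempty ∧
      ∀ C : Cube n → Option Bool,
        (certSize C : ℝ) ≤ (t : ℝ) / (2 * (n : ℝ) + 2) →
        ¬ ∃ f : Cube n → Bool, {g | g ∈ S' ∧ Consistent g C} = {f} := by
  classical
  set k := t / (2 * n + 2) with hk
  have hconv : ∀ C : Cube n → Option Bool,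
      (certSize C : ℝ) ≤ (t : ℝ) / (2 * (n : ℝ) + 2) → certSize C ≤ k := by
    intro C hC
    have hpos : (0:ℝ) < 2 * (n:ℝ) + 2 := by positivity
    rw [le_div_iff₀ hpos] at hC
    have : (certSize C) * (2 * n + 2) ≤ t := by
      have := hC
      push_cast at this
      exact_mod_cast this
    exact (Nat.le_div_iff_mul_le (by omega)).mpr this
  -- card bound
  have hklt : (n + 2) * k < t := by
    have hdm : k * (2 * n + 2) ≤ t := Nat.div_mul_le_self t (2 * n + 2)
    rcases Nat.eq_zero_or_pos k with hk0 | hk1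
    · rw [hk0]; omega
    · nlinarith
  have hcount : (Finset.univ.filter (fun C : Cube n → Option Bool =>
      certSize C ≤ k ∧ ∃ f ∈ S, Consistent f C)).card < S.card := by
    have hsub : (Finset.univ.filter (fun C : Cube n → Option Bool =>
        certSize C ≤ k ∧ ∃ f ∈ S, Consistent f C))
        ⊆ (Finset.univ.filter (fun C : Cube n → Option Bool => certSize C ≤ k)) := by
      intro C hC
      simp only [Finset.mem_filter, Finset.mem_univ, true_and] at hC ⊢
      exact hC.1
    have h1 := (Finset.card_le_card hsub).trans (count_certs n k)
    have h2 : (2 ^ (n + 2) : ℕ) ^ k = 2 ^ ((n + 2) * k) := by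
      rw [← pow_mul]
    have h3 : (2:ℕ) ^ ((n + 2) * k) < 2 ^ t :=
      Nat.pow_lt_pow_right (by norm_num) hklt
    omega
  obtain ⟨S', hS'S, hS'ne, hS'iso⟩ := winnow k S hcount
  exact ⟨S', hS'S, hS'ne, fun C hC => hS'iso C (hconv C hC)⟩
end
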